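/- arXiv:1204.5429 — 3 statements merged into one kernel-verified Lean document; each statement's English description precedes it below -/
import Mathlib

section
/- The sequence defined by x_{n+1} = ((2n+1)/(2n+4)) x_n with x_0 = 1/2 converges to 0, and the total absorbed fluid, equal to the sum expressed via this recurrence, converges to 1/2. Precisely, x_n = (1/2)·∏_{k=0}^{n-1} (2k+1)/(2k+4) tends to 0 as n → ∞. -/
/-!
Unrolling the recurrence gives the product formula. Each factor satisfies
`(2k+1)/(2k+4) ≤ (k+1)/(k+2)`, and the latter product telescopes to `1/(n+1)`,
so `0 ≤ x n ≤ 1/(2(n+1))`.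
-/

open Filter Finset

theorem eq_mul_prod_range_of_succ {M : Type*} [CommMonoid M] {x a : ℕ → M}
    (h : ∀ n, x (n + 1) = a n * x n) (n : ℕ) : x n = x 0 * ∏ k ∈ range n, a k := by
  induction n with
  | zero => simp
  | succ n ih => rw [h, ih, prod_range_succ, mul_left_comm, mul_comm (a n)]

theorem prod_range_succ_div_succ_succ (n : ℕ) :
    ∏ k ∈ range n, ((k : ℝ) + 1) / ((k : ℝ) + 2) = 1 / ((n : ℝ) + 1) := by
  induction n with
  | zero => simp
  | succ n ih =>
    rw [prod_range_succ, ih]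
    push_cast
    field_simp
    ring

theorem two_mul_add_one_div_le_succ_div_succ_succ (k : ℕ) :
    (2 * (k : ℝ) + 1) / (2 * (k : ℝ) + 4) ≤ ((k : ℝ) + 1) / ((k : ℝ) + 2) := by
  rw [div_le_div_iff₀ (by positivity) (by positivity)]
  nlinarith

theorem tendsto_prod_range_two_mul_add_one_div_zero :
    Tendsto (fun n : ℕ ↦ ∏ k ∈ range n, (2 * (k : ℝ) + 1) / (2 * (k : ℝ) + 4))
      atTop (nhds 0) := by
  refine squeeze_zero (fun n ↦ by positivity) (fun n ↦ ?_)
    tendsto_one_div_add_atTop_nhds_zero_nat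
  calc ∏ k ∈ range n, (2 * (k : ℝ) + 1) / (2 * (k : ℝ) + 4)
      ≤ ∏ k ∈ range n, ((k : ℝ) + 1) / ((k : ℝ) + 2) :=
        prod_le_prod (fun k _ ↦ by positivity)
          (fun k _ ↦ two_mul_add_one_div_le_succ_div_succ_succ k)
    _ = 1 / ((n : ℝ) + 1) := prod_range_succ_div_succ_succ n

theorem stmt_0 (x : ℕ → ℝ) (h0 : x 0 = 1/2)
    (hrec : ∀ n : ℕ, x (n+1) = ((2*(n:ℝ)+1)/(2*(n:ℝ)+4)) * x n) :
    (∀ n : ℕ, x n = (1/2) * ∏ k ∈ Finset.range n, ((2*(k:ℝ)+1)/(2*(k:ℝ)+4))) ∧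
    Tendsto x atTop (nhds 0) := by
  have hprod : ∀ n : ℕ, x n = (1/2) * ∏ k ∈ Finset.range n, ((2*(k:ℝ)+1)/(2*(k:ℝ)+4)) :=
    fun n ↦ h0 ▸ eq_mul_prod_range_of_succ hrec n
  refine ⟨hprod, ?_⟩
  rw [funext hprod]
  simpa using tendsto_prod_range_two_mul_add_one_div_zero.const_mul (1/2 : ℝ)
end

section
/- For the tridiagonal matrix M of size (N-1) with entries 1/2 on the sub- and super-diagonal, the powers M^k converge to the zero matrix as k → ∞; hence the Jacobi iteration for the 1D Dirichlet problem converges for any initial guess. -/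
/-!
The vector `v j = sin ((j + 1) π / N)` is positive and, because `sin 0 = sin π = 0` play the role
of the Dirichlet boundary values, satisfies `M v = cos (π / N) • v` by the identity
`sin (x - θ) + sin (x + θ) = 2 cos θ sin x`. For a nonnegative matrix with a positive eigenvector
`v` for `c ∈ [0, 1)`, each entry is controlled by `(M ^ k) i j * v j ≤ (M ^ k v) i = c ^ k * v i`,
so `M ^ k → 0`. The Jacobi error `x k - x⋆` equals `M ^ k (x 0 - x⋆)`, hence tends to zero.
-/

open Filter Real Topology Matrix

namespace Matrix

variable {n : Type*} [Fintype n] [DecidableEq n]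

theorem pow_mulVec_of_mulVec_eq_smul {R : Type*} [CommSemiring R] {M : Matrix n n R}
    {v : n → R} {c : R} (h : M *ᵥ v = c • v) (k : ℕ) : M ^ k *ᵥ v = c ^ k • v := by
  induction k with
  | zero => simp
  | succ k ih => rw [pow_succ, ← mulVec_mulVec, h, mulVec_smul, ih, smul_smul, pow_succ']

variable {M : Matrix n n ℝ} {v : n → ℝ} {c : ℝ}

theorem pow_apply_mul_le_of_mulVec_eq_smul (hM : ∀ i j, 0 ≤ M i j) (hv : ∀ i, 0 < v i)
    (h : M *ᵥ v = c • v) (k : ℕ) (i j : n) : (M ^ k) i j * v j ≤ c ^ k * v i := by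
  have := congrFun (pow_mulVec_of_mulVec_eq_smul h k) i
  rw [Pi.smul_apply, smul_eq_mul, mulVec, dotProduct] at this
  rw [← this]
  exact Finset.single_le_sum (fun l _ => mul_nonneg (pow_apply_nonneg hM k i l) (hv l).le)
    (Finset.mem_univ j)

theorem tendsto_pow_nhds_zero_of_mulVec_eq_smul (hM : ∀ i j, 0 ≤ M i j) (hv : ∀ i, 0 < v i)
    (h : M *ᵥ v = c • v) (hc₀ : 0 ≤ c) (hc₁ : c < 1) :
    Tendsto (fun k => M ^ k) atTop (𝓝 0) := by
  refine tendsto_pi_nhds.2 fun i => tendsto_pi_nhds.2 fun j => ?_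
  have hbound (k : ℕ) : (M ^ k) i j ≤ c ^ k * (v i / v j) := by
    rw [← mul_div_assoc, le_div_iff₀ (hv j)]
    exact pow_apply_mul_le_of_mulVec_eq_smul hM hv h k i j
  have hlim : Tendsto (fun k => c ^ k * (v i / v j)) atTop (𝓝 0) := by
    simpa using (tendsto_pow_atTop_nhds_zero_of_lt_one hc₀ hc₁).mul_const (v i / v j)
  exact squeeze_zero (fun k => pow_apply_nonneg hM k i j) hbound hlim

theorem tendsto_iterate_of_tendsto_pow {R : Type*} [Ring R] [TopologicalSpace R]
    [IsTopologicalRing R] {M : Matrix n n R} (hM : Tendsto (fun k => M ^ k) atTop (𝓝 0))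
    {b xstar : n → R} {x : ℕ → n → R} (hx : ∀ k, x (k + 1) = M *ᵥ x k + b)
    (hxstar : xstar = M *ᵥ xstar + b) : Tendsto x atTop (𝓝 xstar) := by
  have herr (k : ℕ) : x k = M ^ k *ᵥ (x 0 - xstar) + xstar := by
    induction k with
    | zero => simp
    | succ k ih =>
      rw [hx, ih, mulVec_add, mulVec_mulVec, ← pow_succ', add_assoc, ← hxstar]
  have hcont : Continuous fun A : Matrix n n R => A *ᵥ (x 0 - xstar) + xstar := by fun_prop
  rw [show x = _ from funext herr]
  have hlim := (hcont.tendsto 0).comp hM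
  rwa [zero_mulVec, zero_add] at hlim

end Matrix

noncomputable def jacobiMatrix (n : ℕ) : Matrix (Fin n) (Fin n) ℝ :=
  Matrix.of fun i j => if (i : ℕ) + 1 = j ∨ (j : ℕ) + 1 = i then 1 / 2 else 0

theorem jacobiMatrix_mulVec_shift {n : ℕ} (w : ℕ → ℝ) (h₀ : w 0 = 0) (hn : w (n + 1) = 0)
    (i : Fin n) : (jacobiMatrix n *ᵥ fun j => w (j + 1)) i = (w i + w (i + 2)) / 2 := by
  simp only [jacobiMatrix, mulVec, dotProduct, of_apply]
  rw [Fin.sum_univ_eq_sum_range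
    (fun m => (if (i : ℕ) + 1 = m ∨ m + 1 = i then 1 / 2 else 0) * w (m + 1)) n]
  have hsplit (m : ℕ) : (if (i : ℕ) + 1 = m ∨ m + 1 = i then 1 / 2 else 0) * w (m + 1) =
      (if m = i + 1 then w (m + 1) / 2 else 0) + (if m + 1 = i then w (m + 1) / 2 else 0) := by
    split_ifs <;> first | omega | ring
  have hupper :
      ∑ m ∈ Finset.range n, (if m = i + 1 then w (m + 1) / 2 else 0) = w (i + 2) / 2 := by
    rw [Finset.sum_ite_eq']
    split_ifs with h
    · rfl
    · rw [Finset.mem_range] at h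
      rw [show (i : ℕ) + 2 = n + 1 by omega, hn, zero_div]
  have hlower : ∑ m ∈ Finset.range n, (if m + 1 = i then w (m + 1) / 2 else 0) = w i / 2 := by
    have := Finset.sum_range_succ' (fun m => if m = (i : ℕ) then w m / 2 else 0) n
    rw [Finset.sum_ite_eq', if_pos (by simp)] at this
    simpa [h₀] using this.symm
  rw [Finset.sum_congr rfl fun m _ => hsplit m, Finset.sum_add_distrib, hupper, hlower]
  ring

theorem jacobiMatrix_mulVec_sin (n : ℕ) :
    jacobiMatrix n *ᵥ (fun j : Fin n => sin (((j : ℕ) + 1) * (π / (n + 1)))) =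
      cos (π / (n + 1)) • fun j : Fin n => sin (((j : ℕ) + 1) * (π / (n + 1))) := by
  set θ := π / (n + 1)
  have hθ : ((n : ℝ) + 1) * θ = π := by simp only [θ]; field_simp
  ext i
  have hshift := jacobiMatrix_mulVec_shift (n := n) (fun m => sin (m * θ)) (by simp)
    (by push_cast; rw [hθ, sin_pi]) i
  push_cast at hshift
  rw [hshift, Pi.smul_apply, smul_eq_mul, show (i : ℝ) * θ = ((i : ℝ) + 1) * θ - θ by ring,
    show ((i : ℝ) + 2) * θ = ((i : ℝ) + 1) * θ + θ by ring, sin_sub, sin_add]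
  ring

theorem tendsto_pow_jacobiMatrix {n : ℕ} (hn : 1 ≤ n) :
    Tendsto (fun k => jacobiMatrix n ^ k) atTop (𝓝 0) := by
  have hn' : (2 : ℝ) ≤ n + 1 := by norm_cast; omega
  have hθ₀ : 0 < π / (n + 1) := by positivity
  have hθ : π / (n + 1) ≤ π / 2 := div_le_div_of_nonneg_left pi_pos.le two_pos hn'
  refine Matrix.tendsto_pow_nhds_zero_of_mulVec_eq_smul ?_ ?_ (jacobiMatrix_mulVec_sin n)
    (cos_nonneg_of_mem_Icc ⟨by linarith, hθ⟩) ?_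
  · intro i j
    rw [jacobiMatrix, of_apply]
    split_ifs <;> norm_num
  · intro j
    apply sin_pos_of_pos_of_lt_pi (by positivity)
    calc ((j : ℝ) + 1) * (π / (n + 1)) < (n + 1) * (π / (n + 1)) := by
          gcongr; exact_mod_cast j.isLt
      _ = π := by field_simp
  · simpa using cos_lt_cos_of_nonneg_of_le_pi le_rfl (by linarith [pi_pos]) hθ₀

theorem stmt_4 (N : ℕ) (hN : 2 ≤ N)
    (M : Matrix (Fin (N-1)) (Fin (N-1)) ℝ)
    (hM : ∀ i j : Fin (N-1), M i j =
      if (i : ℕ) + 1 = (j : ℕ) ∨ (j : ℕ) + 1 = (i : ℕ) then (1/2 : ℝ) else 0) :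
    Tendsto (fun k : ℕ => M ^ k) atTop (nhds 0) ∧
    ∀ (c : Fin (N-1) → ℝ) (x : ℕ → Fin (N-1) → ℝ) (xstar : Fin (N-1) → ℝ),
      (∀ k : ℕ, x (k+1) = M.mulVec (x k) + c) →
      xstar = M.mulVec xstar + c →
      Tendsto x atTop (nhds xstar) := by
  obtain rfl : M = jacobiMatrix (N - 1) := Matrix.ext hM
  have hpow := tendsto_pow_jacobiMatrix (n := N - 1) (by omega)
  exact ⟨hpow, fun c x xstar hx hxstar => Matrix.tendsto_iterate_of_tendsto_pow hpow hx hxstar⟩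
end

section
/- If T : ℤ² → ℝ is bounded and satisfies T(n,m) = (1/4)(T(n-1,m)+T(n+1,m)+T(n,m-1)+T(n,m+1)) for all (n,m) ∈ ℤ², then T is constant (discrete Liouville theorem). -/
/-!
The horizontal difference `u p = T (p + e₁) - T p` of a bounded harmonic function is again
bounded and harmonic, and its sums along horizontal rays telescope, so they stay bounded.
Harmonicity forces near-maximality to propagate: if `u ≤ s` everywhere then
`s - u (p + e₁) ≤ 4 (s - u p)`. So if `s = sup u` were positive, a point where `u` is
within `3 / 4 ^ k` of `s` would start a ray of `k` terms each close to `s`, whose sum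
exceeds the bound once `k s` is large. Hence `u ≤ 0`, and applying this to `-T` gives
`u = 0`; by symmetry `T` is invariant under both unit shifts, hence constant.
-/

open Finset

def IsDiscreteHarmonic (f : ℤ × ℤ → ℝ) : Prop :=
  ∀ n m : ℤ, f (n, m) = (1/4) * (f (n-1, m) + f (n+1, m) + f (n, m-1) + f (n, m+1))

namespace IsDiscreteHarmonic

variable {f g : ℤ × ℤ → ℝ}

lemma neg (hf : IsDiscreteHarmonic f) : IsDiscreteHarmonic (-f) := fun n m => by
  simp only [Pi.neg_apply, hf n m]
  ring

lemma sub (hf : IsDiscreteHarmonic f) (hg : IsDiscreteHarmonic g) :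
    IsDiscreteHarmonic (f - g) := fun n m => by
  simp only [Pi.sub_apply, hf n m, hg n m]
  ring

lemma comp_add_one_fst (hf : IsDiscreteHarmonic f) :
    IsDiscreteHarmonic (fun p => f (p.1 + 1, p.2)) := fun n m => by
  simp only [hf (n + 1) m, sub_add_cancel]
  ring_nf

lemma comp_swap (hf : IsDiscreteHarmonic f) : IsDiscreteHarmonic (f ∘ Prod.swap) :=
  fun n m => by
    simp only [Function.comp_apply, Prod.swap_prod_mk, hf m n]
    ring

lemma four_mul_sub_le_apply_add_one (hf : IsDiscreteHarmonic f) {s : ℝ} (hs : ∀ p, f p ≤ s)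
    (n m : ℤ) : 4 * f (n, m) - 3 * s ≤ f (n + 1, m) := by
  linarith [hf n m, hs (n - 1, m), hs (n, m - 1), hs (n, m + 1)]

lemma sub_apply_add_le (hf : IsDiscreteHarmonic f) {s : ℝ} (hs : ∀ p, f p ≤ s)
    (n m : ℤ) (j : ℕ) : s - f (n + j, m) ≤ 4 ^ j * (s - f (n, m)) := by
  induction j with
  | zero => simp
  | succ j ih =>
    have hstep := hf.four_mul_sub_le_apply_add_one hs (n + j) m
    push_cast
    rw [← add_assoc, pow_succ]
    linarith

lemma le_zero_of_sum_le (hf : IsDiscreteHarmonic f) (hbdd : BddAbove (Set.range f)) {B : ℝ}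
    (hsum : ∀ n m : ℤ, ∀ k : ℕ, ∑ j ∈ range k, f (n + j, m) ≤ B) (p : ℤ × ℤ) : f p ≤ 0 := by
  set s := sSup (Set.range f)
  have hs : ∀ p, f p ≤ s := fun p => le_csSup hbdd (Set.mem_range_self p)
  suffices s ≤ 0 from (hs p).trans this
  by_contra! hpos
  obtain ⟨k, hk⟩ := exists_nat_gt ((B + 1) / s)
  rw [div_lt_iff₀ hpos] at hk
  obtain ⟨_, ⟨⟨n, m⟩, rfl⟩, hnear⟩ := exists_lt_of_lt_csSup (Set.range_nonempty f)
    (sub_lt_self s (by positivity : (0 : ℝ) < 3 / 4 ^ k))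
  have hgeom : ∑ j ∈ range k, (4 : ℝ) ^ j = (4 ^ k - 1) / 3 := by
    rw [geom_sum_eq (by norm_num)]
    norm_num
  have hdefect : (4 ^ k - 1) / 3 * (s - f (n, m)) ≤ 1 := by
    have hgap : (s - f (n, m)) * 4 ^ k < 3 := by
      rw [← lt_div_iff₀ (by positivity)]
      linarith
    nlinarith [hs (n, m)]
  have hlower := calc
    k * s - 1 ≤ k * s - (4 ^ k - 1) / 3 * (s - f (n, m)) := by linarith
    _ = ∑ j ∈ range k, (s - 4 ^ j * (s - f (n, m))) := by
      rw [sum_sub_distrib, sum_const, card_range, ← sum_mul, hgeom, nsmul_eq_mul]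
    _ ≤ ∑ j ∈ range k, f (n + j, m) :=
      sum_le_sum fun j _ => by linarith [hf.sub_apply_add_le hs n m j]
  linarith [hsum n m k]

lemma apply_add_one_fst_le (hf : IsDiscreteHarmonic f) {c : ℝ} (hc : ∀ p, |f p| ≤ c)
    (n m : ℤ) : f (n + 1, m) ≤ f (n, m) := by
  have hdiff : ∀ p q, f p - f q ≤ 2 * c := fun p q => by
    linarith [abs_le.1 (hc p), abs_le.1 (hc q)]
  have htele : ∀ n m : ℤ, ∀ k : ℕ,
      ∑ j ∈ range k, (f (n + j + 1, m) - f (n + j, m)) = f (n + k, m) - f (n, m) := by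
    intro n m k
    simpa [← add_assoc] using sum_range_sub (fun j : ℕ => f (n + j, m)) k
  have hle := (hf.comp_add_one_fst.sub hf).le_zero_of_sum_le
    ⟨2 * c, by rintro _ ⟨p, rfl⟩; exact hdiff _ _⟩
    (fun n m k => by simpa only [Pi.sub_apply, htele] using hdiff _ _) (n, m)
  simpa using hle

lemma apply_add_one_fst (hf : IsDiscreteHarmonic f) {c : ℝ} (hc : ∀ p, |f p| ≤ c)
    (n m : ℤ) : f (n + 1, m) = f (n, m) :=
  le_antisymm (hf.apply_add_one_fst_le hc n m)
    (neg_le_neg_iff.1 (hf.neg.apply_add_one_fst_le (by simpa using hc) n m))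

end IsDiscreteHarmonic

theorem stmt_13 (T : ℤ × ℤ → ℝ)
    (hbdd : ∃ c : ℝ, ∀ p : ℤ × ℤ, |T p| ≤ c)
    (hharm : ∀ n m : ℤ, T (n, m) =
      (1/4) * (T (n-1, m) + T (n+1, m) + T (n, m-1) + T (n, m+1))) :
    ∀ p q : ℤ × ℤ, T p = T q := by
  obtain ⟨c, hc⟩ := hbdd
  have hharm : IsDiscreteHarmonic T := hharm
  have hfst : ∀ m, Function.Periodic (fun n => T (n, m)) 1 :=
    fun m n => hharm.apply_add_one_fst hc n m
  have hsnd : ∀ n, Function.Periodic (fun m => T (n, m)) 1 :=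
    fun n m => hharm.comp_swap.apply_add_one_fst (fun p => hc p.swap) m n
  have hconst : ∀ p : ℤ × ℤ, T p = T 0 := fun ⟨n, m⟩ => by
    have h₁ := (hfst m).zsmul_eq n
    have h₂ := (hsnd 0).zsmul_eq m
    simp only [smul_eq_mul, mul_one] at h₁ h₂
    exact h₁.trans h₂
  exact fun p q => (hconst p).trans (hconst q).symm
end
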